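/- Consider minimizing ∑_{m=1}^M P_m g_m subject to ∑_{m=1}^M λ_m P_m ≥ δ and 0 ≤ P_m ≤ P_max, where g_m > 0, λ_m > 0, δ > 0. If the ratios g_m/λ_m are pairwise distinct and the problem is feasible, then any optimal solution satisfies P_m ∈ {0, P_max} for all m except possibly one index, and there exists a threshold τ > 0 such that P_m = P_max whenever g_m/λ_m < τ and P_m = 0 whenever g_m/λ_m > τ. -/
import Mathlib


/-- On–off (threshold) structure of the optimal power profile (Proposition 1):
any optimal solution of the LP `min ∑ P_m g_m` s.t. `∑ λ_m P_m ≥ δ`,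
`0 ≤ P_m ≤ P_max` with pairwise distinct ratios `g_m/λ_m` takes values in
`{0, P_max}` except possibly at one index, and is determined by a threshold
`τ` on the ratio `g_m/λ_m`. -/
theorem stmt_3 (M : ℕ) (g lam : Fin M → ℝ) (δ Pmax : ℝ)
    (hg : ∀ m, 0 < g m) (hlam : ∀ m, 0 < lam m) (hδ : 0 < δ) (hPmax : 0 < Pmax)
    (hdistinct : ∀ m n : Fin M, m ≠ n → g m / lam m ≠ g n / lam n)
    (P : Fin M → ℝ)
    (hfeas : (∑ m, lam m * P m ≥ δ) ∧ ∀ m, 0 ≤ P m ∧ P m ≤ Pmax)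
    (hopt : ∀ P' : Fin M → ℝ,
      ((∑ m, lam m * P' m ≥ δ) ∧ ∀ m, 0 ≤ P' m ∧ P' m ≤ Pmax) →
      ∑ m, P m * g m ≤ ∑ m, P' m * g m) :
    (∃ m₀ : Fin M, ∀ m : Fin M, m ≠ m₀ → P m = 0 ∨ P m = Pmax) ∧
    (∃ τ > (0 : ℝ), ∀ m : Fin M,
      (g m / lam m < τ → P m = Pmax) ∧ (g m / lam m > τ → P m = 0)) := by
  -- Key exchange lemma
  have e1 : ∀ (c : ℝ) (j : Fin M) (f : Fin M → ℝ),
      ∑ k, f k * (if k = j then c else 0) = f j * c := by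
    intro c j f
    simp [mul_ite, Finset.sum_ite_eq']
  have L : ∀ m n : Fin M, g m / lam m < g n / lam n → P m = Pmax ∨ P n = 0 := by
    intro m n hr
    by_contra hc
    push_neg at hc
    obtain ⟨hm, hn⟩ := hc
    have hmP : P m < Pmax := lt_of_le_of_ne (hfeas.2 m).2 hm
    have hnP : 0 < P n := lt_of_le_of_ne (hfeas.2 n).1 (Ne.symm hn)
    have hmn : m ≠ n := by rintro rfl; exact lt_irrefl _ hr
    have hlm := hlam m
    have hln := hlam n
    have hlmne : lam m ≠ 0 := ne_of_gt hlm
    have hlnne : lam n ≠ 0 := ne_of_gt hln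
    set ε := min (lam m * (Pmax - P m)) (lam n * P n) with hεdef
    have hε0 : 0 < ε := lt_min (mul_pos hlm (by linarith)) (mul_pos hln hnP)
    set P' := fun k => P k + (if k = m then ε / lam m else 0)
        - (if k = n then ε / lam n else 0) with hP'def
    have hsum1 : ∑ k, lam k * P' k = ∑ k, lam k * P k := by
      have : ∑ k, lam k * P' k
          = (∑ k, lam k * P k) + lam m * (ε / lam m) - lam n * (ε / lam n) := by
        simp only [hP'def, mul_add, mul_sub]
        rw [Finset.sum_sub_distrib, Finset.sum_add_distrib, e1, e1]
      rw [this, mul_div_cancel₀ _ hlmne, mul_div_cancel₀ _ hlnne]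
      ring
    have hsum2 : ∑ k, P' k * g k
        = (∑ k, P k * g k) + ε * (g m / lam m) - ε * (g n / lam n) := by
      have : ∑ k, P' k * g k
          = (∑ k, P k * g k) + g m * (ε / lam m) - g n * (ε / lam n) := by
        simp only [hP'def, add_mul, sub_mul]
        rw [Finset.sum_sub_distrib, Finset.sum_add_distrib]
        congr 1
        · congr 1
          · exact (Finset.sum_congr rfl (fun k _ => mul_comm _ _)).trans (e1 _ m g)
        · exact (Finset.sum_congr rfl (fun k _ => mul_comm _ _)).trans (e1 _ n g)
      rw [this]
      field_simp
    have hb : ∀ k, 0 ≤ P' k ∧ P' k ≤ Pmax := by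
      intro k
      by_cases h1 : k = m
      · subst h1
        have hknn : k ≠ n := hmn
        simp only [hP'def, if_pos rfl, if_neg hknn, sub_zero, if_true]
        have h2 : ε / lam k ≤ Pmax - P k := by
          rw [div_le_iff₀ hlm]
          calc ε ≤ lam k * (Pmax - P k) := min_le_left _ _
            _ = (Pmax - P k) * lam k := mul_comm _ _
        have h3 : 0 < ε / lam k := div_pos hε0 hlm
        constructor
        · linarith [(hfeas.2 k).1]
        · linarith
      · by_cases h2 : k = n
        · subst h2
          have hknm : k ≠ m := fun h => hmn h.symm
          simp only [hP'def, if_neg hknm, if_pos rfl, add_zero, if_true]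
          have h3 : ε / lam k ≤ P k := by
            rw [div_le_iff₀ hln]
            calc ε ≤ lam k * P k := min_le_right _ _
              _ = P k * lam k := mul_comm _ _
          have h4 : 0 < ε / lam k := div_pos hε0 hln
          constructor
          · linarith
          · linarith [(hfeas.2 k).2]
        · simp only [hP'def, if_neg h1, if_neg h2, add_zero, sub_zero]
          exact hfeas.2 k
    have hfeas' : (∑ k, lam k * P' k ≥ δ) ∧ ∀ k, 0 ≤ P' k ∧ P' k ≤ Pmax := by
      refine ⟨?_, hb⟩
      rw [hsum1]; exact hfeas.1
    have hle := hopt P' hfeas'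
    rw [hsum2] at hle
    have hlt : ε * (g m / lam m) < ε * (g n / lam n) :=
      mul_lt_mul_of_pos_left hr hε0
    linarith
  -- Non-triviality: some P n > 0
  have hS : ∃ n, 0 < P n := by
    by_contra h
    push_neg at h
    have hz : ∀ k, P k = 0 := fun k => le_antisymm (h k) (hfeas.2 k).1
    have hzero : (∑ m, lam m * P m) = 0 := by simp [hz]
    have := hfeas.1
    rw [hzero] at this
    linarith
  obtain ⟨n, hn⟩ := hS
  set S := Finset.univ.filter (fun k : Fin M => 0 < P k) with hSdef
  have hSne : S.Nonempty := ⟨n, by simp [hSdef, hn]⟩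
  obtain ⟨n₀, hn₀S, hn₀max⟩ := Finset.exists_max_image S (fun k => g k / lam k) hSne
  have hn₀pos : 0 < P n₀ := (Finset.mem_filter.mp hn₀S).2
  set τ := g n₀ / lam n₀ with hτdef
  have hτ0 : 0 < τ := div_pos (hg n₀) (hlam n₀)
  have claim1 : ∀ m, g m / lam m < τ → P m = Pmax := by
    intro m hm
    exact (L m n₀ hm).resolve_right (ne_of_gt hn₀pos)
  have claim2 : ∀ m, g m / lam m > τ → P m = 0 := by
    intro m hm
    by_contra h
    have hpos : 0 < P m := lt_of_le_of_ne (hfeas.2 m).1 (Ne.symm h)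
    have hmS : m ∈ S := by simp [hSdef, hpos]
    have := hn₀max m hmS
    linarith
  constructor
  · refine ⟨n₀, fun m hm => ?_⟩
    by_cases hp : 0 < P m
    · have hmS : m ∈ S := by simp [hSdef, hp]
      have hle := hn₀max m hmS
      have hne := hdistinct m n₀ hm
      right
      exact claim1 m (lt_of_le_of_ne hle hne)
    · left
      exact le_antisymm (not_lt.mp hp) (hfeas.2 m).1
  · exact ⟨τ, hτ0, fun m => ⟨claim1 m, claim2 m⟩⟩
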